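/- Let K ≥ 2 be an integer and let H : ℝ → ℝ be a function for which there is a real r such that |H(x)| ≤ exp(−K·x) for all x ≥ r. Then there is a positive integer A such that for every integer a ≥ A and every integer n with a ≤ n ≤ K·(a+1), one has |Δ^{n−a}(Δ−1)^{a} H(a)| < 1/2. -/

import Mathlib

/-- Forward difference operator on functions `ℝ → ℝ`: `Δ f x = f (x+1) - f x`. -/
noncomputable def fwdD (f : ℝ → ℝ) : ℝ → ℝ := fun x => f (x + 1) - f x

/-- The operator `Δ - 1` on functions `ℝ → ℝ`: `(Δ-1) f x = f (x+1) - 2 f x`. -/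
noncomputable def fwdDOne (f : ℝ → ℝ) : ℝ → ℝ := fun x => f (x + 1) - 2 * f x

/-!
On a half-line `[x₀, ∞)`, `Δ` at most doubles and `Δ - 1` at most triples a uniform bound on `|f|`.
Since `|H| ≤ e^{-Ka}` on `[a, ∞)` once `a ≥ r`, the quantity is at most
`2^{n-a} 3^a e^{-Ka} ≤ 2^K q^a` with `q = 3 · 2^{K-1} / e^K`, using `n - a ≤ K + (K - 1) a`.
For `K ≥ 2` we have `q < 1` because `e^2 > 6`, so `2^K q^a → 0`.
-/

open Filter

lemma abs_fwdD_iterate_le {f : ℝ → ℝ} {C x₀ : ℝ} (h : ∀ y, x₀ ≤ y → |f y| ≤ C) (m : ℕ) :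
    ∀ y, x₀ ≤ y → |fwdD^[m] f y| ≤ 2 ^ m * C := by
  induction m with
  | zero => simpa using h
  | succ m ih =>
    intro y hy
    rw [Function.iterate_succ_apply', fwdD]
    calc |fwdD^[m] f (y + 1) - fwdD^[m] f y|
        ≤ |fwdD^[m] f (y + 1)| + |fwdD^[m] f y| := abs_sub _ _
      _ ≤ 2 ^ m * C + 2 ^ m * C := add_le_add (ih _ (by linarith)) (ih y hy)
      _ = 2 ^ (m + 1) * C := by ring

lemma abs_fwdDOne_iterate_le {f : ℝ → ℝ} {C x₀ : ℝ} (h : ∀ y, x₀ ≤ y → |f y| ≤ C) (m : ℕ) :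
    ∀ y, x₀ ≤ y → |fwdDOne^[m] f y| ≤ 3 ^ m * C := by
  induction m with
  | zero => simpa using h
  | succ m ih =>
    intro y hy
    rw [Function.iterate_succ_apply', fwdDOne]
    calc |fwdDOne^[m] f (y + 1) - 2 * fwdDOne^[m] f y|
        ≤ |fwdDOne^[m] f (y + 1)| + 2 * |fwdDOne^[m] f y| := by
          simpa only [abs_mul, abs_two] using abs_sub (fwdDOne^[m] f (y + 1)) (2 * fwdDOne^[m] f y)
      _ ≤ 3 ^ m * C + 2 * (3 ^ m * C) := by gcongr <;> [exact ih _ (by linarith); exact ih y hy]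
      _ = 3 ^ (m + 1) * C := by ring

lemma three_mul_two_pow_pred_lt_exp {K : ℕ} (hK : 2 ≤ K) : 3 * 2 ^ (K - 1) < Real.exp K := by
  obtain ⟨k, rfl⟩ : ∃ k, K = k + 2 := ⟨K - 2, by omega⟩
  have he : (2.7 : ℝ) < Real.exp 1 := Real.exp_one_gt_d9.trans' (by norm_num)
  have he2 : (6 : ℝ) < Real.exp 1 ^ 2 := by nlinarith
  have hpow : (2 : ℝ) ^ k ≤ Real.exp 1 ^ k := pow_le_pow_left₀ (by norm_num) (by linarith) k
  calc (3 : ℝ) * 2 ^ (k + 2 - 1) = 6 * 2 ^ k := by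
        rw [show k + 2 - 1 = k + 1 by omega, pow_succ]; ring
    _ < Real.exp 1 ^ 2 * Real.exp 1 ^ k := mul_lt_mul he2 hpow (by positivity) (by positivity)
    _ = Real.exp (k + 2 : ℕ) := by rw [← Real.exp_one_pow, pow_add, mul_comm]

lemma two_pow_mul_three_pow_mul_exp_le {K a n : ℕ} (hn : n ≤ K * (a + 1)) :
    (2 : ℝ) ^ (n - a) * (3 ^ a * Real.exp (-(K : ℝ) * a))
      ≤ 2 ^ K * (3 * 2 ^ (K - 1) / Real.exp K) ^ a := by
  have hexp : n - a ≤ K + (K - 1) * a := by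
    rcases K with _ | k
    · omega
    · have : (k + 1) * (a + 1) = k * a + k + a + 1 := by ring
      rw [Nat.add_sub_cancel]; omega
  calc (2 : ℝ) ^ (n - a) * (3 ^ a * Real.exp (-(K : ℝ) * a))
      ≤ 2 ^ (K + (K - 1) * a) * (3 ^ a * Real.exp (-(K : ℝ) * a)) := by
        gcongr; norm_num
    _ = 2 ^ K * (3 * 2 ^ (K - 1) / Real.exp K) ^ a := by
        rw [mul_comm (-(K : ℝ)), Real.exp_nat_mul, Real.exp_neg, pow_add, pow_mul, div_pow,
          mul_pow, inv_pow, div_eq_mul_inv]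
        ring

theorem stmt2 (K : ℕ) (hK : 2 ≤ K) (H : ℝ → ℝ) (r : ℝ)
    (hH : ∀ x : ℝ, r ≤ x → |H x| ≤ Real.exp (-(K : ℝ) * x)) :
    ∃ A : ℕ, 0 < A ∧ ∀ a : ℕ, A ≤ a → ∀ n : ℕ, a ≤ n → n ≤ K * (a + 1) →
      |fwdD^[n - a] (fwdDOne^[a] H) (a : ℝ)| < 1 / 2 := by
  set q : ℝ := 3 * 2 ^ (K - 1) / Real.exp K
  have hq : q < 1 := (div_lt_one (Real.exp_pos _)).2 (three_mul_two_pow_pred_lt_exp hK)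
  have hsmall : ∀ᶠ a : ℕ in atTop, (2 : ℝ) ^ K * q ^ a < 1 / 2 := by
    refine ((tendsto_pow_atTop_nhds_zero_of_lt_one (by positivity) hq).const_mul _)
      |>.eventually_lt_const ?_
    norm_num
  obtain ⟨A₀, hA₀⟩ := eventually_atTop.1 hsmall
  refine ⟨max (max A₀ 1) ⌈r⌉₊, by positivity, fun a ha n _ hn => ?_⟩
  have hra : r ≤ a := Nat.ceil_le.1 (le_of_max_le_right ha)
  have hHa : ∀ y, (a : ℝ) ≤ y → |H y| ≤ Real.exp (-(K : ℝ) * a) := fun y hy =>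
    (hH y (hra.trans hy)).trans <| Real.exp_le_exp.2 <|
      mul_le_mul_of_nonpos_left hy (by simp)
  calc |fwdD^[n - a] (fwdDOne^[a] H) (a : ℝ)|
      ≤ 2 ^ (n - a) * (3 ^ a * Real.exp (-(K : ℝ) * a)) :=
        abs_fwdD_iterate_le (abs_fwdDOne_iterate_le hHa a) _ _ le_rfl
    _ ≤ 2 ^ K * q ^ a := two_pow_mul_three_pow_mul_exp_le hn
    _ < 1 / 2 := hA₀ a (le_of_max_le_left (le_of_max_le_left ha))
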